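/- Let d ≥ 1, let k ≥ 1, and let λ be any ℤ₂-cochain on the d-dimensional hypercube. Then (δλ) ∪_k (δλ) = δ( λ ∪_k (δλ) + λ ∪_{k−1} λ ), as an equality of ℤ₂-cochains. In particular, the ∪_k-square of a coboundary is itself a coboundary. -/

import Mathlib

/-- The three possible entries of a cell label of the hypercube:
`dot` = `•` (a spanned direction), `pls` = `+`, `mns` = `−`. -/
inductive Sgn : Type
  | dot : Sgn
  | pls : Sgn
  | mns : Sgn
  deriving DecidableEq

instance instFintypeSgn : Fintype Sgn :=
  ⟨{Sgn.dot, Sgn.pls, Sgn.mns}, fun x => by cases x <;> simp⟩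

abbrev Cell (d : ℕ) := Fin d → Sgn

abbrev Cochain (d : ℕ) := Cell d → ZMod 2

def topCell (d : ℕ) : Cell d := fun _ => Sgn.dot

def dots {d : ℕ} (w : Cell d) : Finset (Fin d) :=
  Finset.univ.filter (fun j => w j = Sgn.dot)

def delta {d : ℕ} (α : Cochain d) : Cochain d := fun w =>
  ∑ j ∈ dots w, (α (Function.update w j Sgn.pls) + α (Function.update w j Sgn.mns))

def bothDot {d : ℕ} (z z' : Cell d) : Finset (Fin d) :=
  Finset.univ.filter (fun j => z j = Sgn.dot ∧ z' j = Sgn.dot)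

/-- The allowed values of `(z_j, z'_j)` at a coordinate `j` not in the common-`•` set `I`:
`(+,•)` or `(•,−)` when `ℓ(j) = #{i ∈ I : i < j}` is even, and `(−,•)` or `(•,+)` when it
is odd. -/
def pairCond {d : ℕ} (I : Finset (Fin d)) (j : Fin d) (a b : Sgn) : Prop :=
  if (I.filter (fun i => i < j)).card % 2 = 0 then
    (a = Sgn.pls ∧ b = Sgn.dot) ∨ (a = Sgn.dot ∧ b = Sgn.mns)
  else
    (a = Sgn.mns ∧ b = Sgn.dot) ∨ (a = Sgn.dot ∧ b = Sgn.pls)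

/-- `(z, z') ∈ Int_m`, read relative to the cell `w`. -/
def IntPair {d : ℕ} (m : ℕ) (w z z' : Cell d) : Prop :=
  (∀ j, w j ≠ Sgn.dot → z j = w j ∧ z' j = w j) ∧
    (bothDot z z').card = m ∧
    ∀ j, w j = Sgn.dot → j ∉ bothDot z z' → pairCond (bothDot z z') j (z j) (z' j)

open Classical in
noncomputable def intPairs {d : ℕ} (m : ℕ) (w : Cell d) : Finset (Cell d × Cell d) :=
  Finset.univ.filter (fun p => IntPair m w p.1 p.2)

/-- `cup m α β = α ∪_m β`. -/
noncomputable def cup {d : ℕ} (m : ℕ) (α β : Cochain d) : Cochain d := fun w =>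
  ∑ p ∈ intPairs m w, α p.1 * β p.2

/-!
Write `α_s` for the restriction of a cochain `α` on the `(d+1)`-cube to the cells whose first
entry is `s`, a cochain on the `d`-cube. The coboundary and the cup products are recursive in
the first coordinate: for `s = ±` they commute with restriction, while
`(δα)_• = α_+ + α_− + δ(α_•)` and `(α ∪_m β)_• = β_• ∪_{m−1} α_• + α_+ ∪_m β_• + α_• ∪_m β_−`.
Induction on `d` then gives `δδ = 0` and the coboundary formula
`δ(α ∪_m β) = δα ∪_m β + α ∪_m δβ + α ∪_{m−1} β + β ∪_{m−1} α` over `ℤ₂`.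
Applied to `(λ, δλ)` with index `k` (where `δδλ = 0`) and to `(λ, λ)` with index `k − 1`, the
sum of the two instances leaves only `δλ ∪_k δλ`.
-/

/-- Makes `Cochain d` a ring of characteristic `2` (`CharP.pi`), so that `grind` cancels
terms in pairs. -/
instance : Nonempty Sgn := ⟨Sgn.dot⟩

theorem Sgn.sum_univ {M : Type*} [AddCommMonoid M] (f : Sgn → M) :
    ∑ s, f s = f Sgn.dot + f Sgn.pls + f Sgn.mns := by
  change ∑ s ∈ {Sgn.dot, Sgn.pls, Sgn.mns}, f s = _
  simp [add_assoc]

namespace Cochain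

variable {d : ℕ}

theorem sum_cell_succ {M : Type*} [AddCommMonoid M] (f : Cell (d + 1) → M) :
    ∑ w, f w = ∑ s, ∑ u, f (Fin.cons s u) := by
  rw [← (Fin.consEquiv fun _ => Sgn).sum_comp, Fintype.sum_prod_type]
  rfl

def slice (s : Sgn) (α : Cochain (d + 1)) : Cochain d := fun u => α (Fin.cons s u)

@[simp] theorem slice_apply (s : Sgn) (α : Cochain (d + 1)) (u : Cell d) :
    slice s α u = α (Fin.cons s u) := rfl

@[simp] theorem slice_zero (s : Sgn) : slice s (0 : Cochain (d + 1)) = 0 := rfl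

@[simp] theorem slice_add (s : Sgn) (α β : Cochain (d + 1)) :
    slice s (α + β) = slice s α + slice s β := rfl

theorem ext_slice {α β : Cochain (d + 1)} (h : ∀ s, slice s α = slice s β) : α = β := by
  funext w
  refine Fin.consCases (fun s u => ?_) w
  exact congrFun (h s) u

theorem delta_apply (α : Cochain d) (w : Cell d) : delta α w =
    ∑ j, if w j = Sgn.dot then α (Function.update w j Sgn.pls) + α (Function.update w j Sgn.mns)
      else 0 := by
  rw [delta, dots, Finset.sum_filter]

theorem delta_add (α β : Cochain d) : delta (α + β) = delta α + delta β := by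
  funext w
  simp only [delta, Pi.add_apply, ← Finset.sum_add_distrib]
  exact Finset.sum_congr rfl fun _ _ => add_add_add_comm _ _ _ _

theorem delta_eq_zero_of_dim_zero (α : Cochain 0) : delta α = 0 := by
  funext w
  simp [delta_apply]

theorem slice_delta_of_ne_dot {s : Sgn} (hs : s ≠ Sgn.dot) (α : Cochain (d + 1)) :
    slice s (delta α) = delta (slice s α) := by
  funext u
  simp [delta_apply, Fin.sum_univ_succ, ← Fin.cons_update, hs]

theorem slice_dot_delta (α : Cochain (d + 1)) :
    slice Sgn.dot (delta α) = slice Sgn.pls α + slice Sgn.mns α + delta (slice Sgn.dot α) := by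
  funext u
  simp [delta_apply, Fin.sum_univ_succ, ← Fin.cons_update, add_assoc]

theorem delta_delta (α : Cochain d) : delta (delta α) = 0 := by
  induction d with
  | zero => exact delta_eq_zero_of_dim_zero _
  | succ d ih =>
    refine ext_slice fun s => ?_
    by_cases hs : s = Sgn.dot
    · subst hs
      simp only [slice_dot_delta, slice_delta_of_ne_dot, delta_add, ih, ne_eq, reduceCtorEq,
        not_false_eq_true, slice_zero]
      grind
    · simp only [slice_delta_of_ne_dot hs, ih, slice_zero]

theorem mem_bothDot {z z' : Cell d} {j : Fin d} :
    j ∈ bothDot z z' ↔ z j = Sgn.dot ∧ z' j = Sgn.dot := by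
  simp [bothDot]

theorem bothDot_comm (z z' : Cell d) : bothDot z z' = bothDot z' z := by
  simp only [bothDot, and_comm]

theorem card_bothDot_cons (a b : Sgn) (z z' : Cell d) :
    (bothDot (Fin.cons a z : Cell (d + 1)) (Fin.cons b z')).card =
      (if a = Sgn.dot ∧ b = Sgn.dot then 1 else 0) + (bothDot z z').card := by
  simp only [bothDot, Fin.card_filter_univ_succ', Fin.cons_zero, Fin.cons_succ]

theorem card_bothDot_cons_lt_succ (a b : Sgn) (z z' : Cell d) (i : Fin d) :
    ((bothDot (Fin.cons a z : Cell (d + 1)) (Fin.cons b z')).filter (· < i.succ)).card =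
      (if a = Sgn.dot ∧ b = Sgn.dot then 1 else 0) + ((bothDot z z').filter (· < i)).card := by
  simp only [bothDot, Finset.filter_filter, Fin.card_filter_univ_succ', Fin.cons_zero,
    Fin.cons_succ, Fin.succ_pos, and_true, Fin.succ_lt_succ_iff]

theorem pairCond_zero (I : Finset (Fin (d + 1))) (a b : Sgn) :
    pairCond I 0 a b ↔ (a = Sgn.pls ∧ b = Sgn.dot) ∨ (a = Sgn.dot ∧ b = Sgn.mns) := by
  simp [pairCond]

theorem pairCond_bothDot_cons_succ (a b : Sgn) (z z' : Cell d) (i : Fin d) (x y : Sgn) :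
    pairCond (bothDot (Fin.cons a z : Cell (d + 1)) (Fin.cons b z')) i.succ x y ↔
      if a = Sgn.dot ∧ b = Sgn.dot then pairCond (bothDot z z') i y x
      else pairCond (bothDot z z') i x y := by
  unfold pairCond
  rw [card_bothDot_cons_lt_succ]
  split_ifs <;> first | rfl | omega | tauto

theorem intPair_cons_of_ne_dot {s : Sgn} (hs : s ≠ Sgn.dot) (m : ℕ) (a b : Sgn)
    (u z z' : Cell d) :
    IntPair m (Fin.cons s u : Cell (d + 1)) (Fin.cons a z) (Fin.cons b z') ↔
      a = s ∧ b = s ∧ IntPair m u z z' := by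
  cases s <;> cases a <;> cases b <;> simp [IntPair, Fin.forall_fin_succ, card_bothDot_cons,
    mem_bothDot, pairCond_bothDot_cons_succ] at hs ⊢

/-- A common `•` in the first coordinate raises `ℓ(j)` by one at every later coordinate, which
exchanges the roles of `z` and `z'` there. -/
theorem intPair_dot_cons (m : ℕ) (a b : Sgn) (u z z' : Cell d) :
    IntPair m (Fin.cons Sgn.dot u : Cell (d + 1)) (Fin.cons a z) (Fin.cons b z') ↔
      if a = Sgn.dot ∧ b = Sgn.dot then m ≠ 0 ∧ IntPair (m - 1) u z' z
      else ((a = Sgn.pls ∧ b = Sgn.dot) ∨ (a = Sgn.dot ∧ b = Sgn.mns)) ∧ IntPair m u z z' := by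
  have hcard (c : ℕ) : 1 + c = m ↔ m ≠ 0 ∧ c = m - 1 := by omega
  split_ifs with hab
  · obtain ⟨rfl, rfl⟩ := hab
    simp only [IntPair, ne_eq, Fin.forall_fin_succ, Fin.cons_zero, not_true_eq_false, and_self,
      implies_true, Fin.cons_succ, true_and, card_bothDot_cons, ↓reduceIte, hcard, mem_bothDot,
      not_and, imp_false, IsEmpty.forall_iff, pairCond_bothDot_cons_succ,
      and_comm (a := z' _ = u _), bothDot_comm z' z]
    tauto
  · simp only [IntPair, ne_eq, Fin.forall_fin_succ, Fin.cons_zero, not_true_eq_false, hab,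
      imp_self, Fin.cons_succ, true_and, card_bothDot_cons, ↓reduceIte, zero_add, mem_bothDot,
      not_and, pairCond_zero, forall_const, pairCond_bothDot_cons_succ]
    tauto

open Classical in
theorem cup_apply (m : ℕ) (α β : Cochain d) (w : Cell d) :
    cup m α β w = ∑ z, ∑ z', if IntPair m w z z' then α z * β z' else 0 := by
  rw [cup, intPairs, Finset.sum_filter, Fintype.sum_prod_type]

theorem cup_add_left (m : ℕ) (α α' β : Cochain d) :
    cup m (α + α') β = cup m α β + cup m α' β := by
  funext w
  simp only [cup, Pi.add_apply, add_mul, Finset.sum_add_distrib]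

theorem cup_add_right (m : ℕ) (α β β' : Cochain d) :
    cup m α (β + β') = cup m α β + cup m α β' := by
  funext w
  simp only [cup, Pi.add_apply, mul_add, Finset.sum_add_distrib]

theorem slice_cup_of_ne_dot {s : Sgn} (hs : s ≠ Sgn.dot) (m : ℕ) (α β : Cochain (d + 1)) :
    slice s (cup m α β) = cup m (slice s α) (slice s β) := by
  classical
  funext u
  simp only [slice_apply, cup_apply, sum_cell_succ, intPair_cons_of_ne_dot hs, ite_and]
  simp [Finset.sum_ite_irrel]

/-- `∪_m` for an integer index, with the convention `∪_m = 0` for `m < 0`, so that the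
coboundary formula `delta_cupInt` holds uniformly in `m`. -/
noncomputable def cupInt : ℤ → Cochain d → Cochain d → Cochain d
  | (m : ℕ), α, β => cup m α β
  | Int.negSucc _, _, _ => 0

@[simp] theorem cupInt_natCast (m : ℕ) (α β : Cochain d) : cupInt m α β = cup m α β := rfl

theorem cupInt_of_neg {m : ℤ} (hm : m < 0) (α β : Cochain d) : cupInt m α β = 0 := by
  cases m with
  | ofNat m => exact absurd hm (Int.natCast_nonneg m).not_gt
  | negSucc m => rfl

theorem cupInt_natCast_sub_one (m : ℕ) (α β : Cochain d) :
    cupInt ((m : ℤ) - 1) α β = if m = 0 then 0 else cup (m - 1) α β := by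
  rcases m with _ | m
  · rfl
  · simp

theorem slice_dot_cup (m : ℕ) (α β : Cochain (d + 1)) :
    slice Sgn.dot (cup m α β) = cupInt ((m : ℤ) - 1) (slice Sgn.dot β) (slice Sgn.dot α)
      + cup m (slice Sgn.pls α) (slice Sgn.dot β) + cup m (slice Sgn.dot α) (slice Sgn.mns β) := by
  classical
  funext u
  rw [cupInt_natCast_sub_one]
  simp only [slice_apply, cup_apply, sum_cell_succ, Sgn.sum_univ, intPair_dot_cons]
  by_cases hm : m = 0
  · simp [hm, cup_apply, add_comm]
  · simp only [and_self, ↓reduceIte, ne_eq, hm, not_false_eq_true, true_and, reduceCtorEq,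
      and_false, or_self, false_and, Finset.sum_const_zero, add_zero, or_true, and_true, or_false,
      Pi.add_apply, cup_apply, slice_apply]
    rw [Finset.sum_add_distrib, Finset.sum_comm]
    simp only [mul_comm (β _)]
    abel

theorem cupInt_add_left (m : ℤ) (α α' β : Cochain d) :
    cupInt m (α + α') β = cupInt m α β + cupInt m α' β := by
  cases m with
  | ofNat m => exact cup_add_left m α α' β
  | negSucc m => exact (add_zero 0).symm

theorem cupInt_add_right (m : ℤ) (α β β' : Cochain d) :
    cupInt m α (β + β') = cupInt m α β + cupInt m α β' := by
  cases m with
  | ofNat m => exact cup_add_right m α β β'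
  | negSucc m => exact (add_zero 0).symm

theorem cupInt_zero_left (m : ℤ) (β : Cochain d) : cupInt m 0 β = 0 := by
  simpa using cupInt_add_left m 0 0 β

theorem cupInt_zero_right (m : ℤ) (α : Cochain d) : cupInt m α 0 = 0 := by
  simpa using cupInt_add_right m α 0 0

theorem cupInt_comm_of_dim_zero (m : ℤ) (α β : Cochain 0) : cupInt m α β = cupInt m β α := by
  cases m with
  | ofNat m =>
    funext w
    show ∑ p ∈ intPairs m w, α p.1 * β p.2 = ∑ p ∈ intPairs m w, β p.1 * α p.2
    refine Finset.sum_congr rfl fun p _ => ?_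
    rw [Subsingleton.elim p.1 p.2, mul_comm]
  | negSucc m => rfl

theorem slice_cupInt_of_ne_dot {s : Sgn} (hs : s ≠ Sgn.dot) (m : ℤ) (α β : Cochain (d + 1)) :
    slice s (cupInt m α β) = cupInt m (slice s α) (slice s β) := by
  cases m with
  | ofNat m => exact slice_cup_of_ne_dot hs m α β
  | negSucc m => rfl

theorem slice_dot_cupInt (m : ℤ) (α β : Cochain (d + 1)) :
    slice Sgn.dot (cupInt m α β) = cupInt (m - 1) (slice Sgn.dot β) (slice Sgn.dot α)
      + cupInt m (slice Sgn.pls α) (slice Sgn.dot β)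
      + cupInt m (slice Sgn.dot α) (slice Sgn.mns β) := by
  cases m with
  | ofNat m => exact slice_dot_cup m α β
  | negSucc m =>
    simp only [cupInt_of_neg (Int.negSucc_lt_zero m),
      cupInt_of_neg (show Int.negSucc m - 1 < 0 by omega)]
    rfl

theorem delta_cupInt (m : ℤ) (α β : Cochain d) :
    delta (cupInt m α β) =
      cupInt m (delta α) β + cupInt m α (delta β) + cupInt (m - 1) α β + cupInt (m - 1) β α := by
  induction d generalizing m with
  | zero =>
    simp only [delta_eq_zero_of_dim_zero, cupInt_zero_left, cupInt_zero_right,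
      cupInt_comm_of_dim_zero (m - 1) β α, zero_add, CharTwo.add_self_eq_zero]
  | succ d ih =>
    refine ext_slice fun s => ?_
    by_cases hs : s = Sgn.dot
    · subst hs
      simp only [slice_add, slice_dot_delta, slice_delta_of_ne_dot, slice_dot_cupInt,
        slice_cupInt_of_ne_dot, delta_add, ih, cupInt_add_left, cupInt_add_right, ne_eq,
        reduceCtorEq, not_false_eq_true]
      grind
    · simp only [slice_add, slice_delta_of_ne_dot hs, slice_cupInt_of_ne_dot hs, ih]

theorem cupInt_delta_self (m : ℤ) (l : Cochain d) :
    cupInt m (delta l) (delta l) = delta (cupInt m l (delta l) + cupInt (m - 1) l l) := by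
  rw [delta_add, delta_cupInt, delta_cupInt, delta_delta, cupInt_zero_right]
  grind

end Cochain

theorem cup_square_of_coboundary (d k : ℕ) (hk : 1 ≤ k) (l : Cochain d) :
    cup k (delta l) (delta l) = delta (cup k l (delta l) + cup (k - 1) l l) := by
  obtain ⟨k, rfl⟩ := Nat.exists_eq_add_of_le' hk
  have h := Cochain.cupInt_delta_self (k + 1 : ℤ) l
  rw [add_sub_cancel_right, ← Nat.cast_succ] at h
  simpa only [Cochain.cupInt_natCast, Nat.add_sub_cancel] using h
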